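/- arXiv:1011.6553 — 6 statements merged into one kernel-verified Lean document; each statement's English description precedes it below -/
import Mathlib

section
/- Let X be a Banach space and (x_n) a bounded sequence in X such that ‖∑_{j=1}^n α_j x_j‖ ≥ c ∑_{j=1}^n |α_j| for all n and real scalars, where c > 0. Then for every weak* cluster point x** of (x_n) in X** and every x ∈ X, ‖x** − x‖ ≥ c; i.e., d(x**, X) ≥ c. -/
open Filter Topology NormedSpace Finset

/-- The set of weak* cluster points in the bidual of a sequence `(x k)` in `X`. -/
def weakStarClusterPoints {X : Type*} [NormedAddCommGroup X] [NormedSpace ℝ X]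
    (x : ℕ → X) : Set (StrongDual ℝ (StrongDual ℝ X)) :=
  {y | MapClusterPt (StrongDual.toWeakDual y) atTop
        fun k => StrongDual.toWeakDual (inclusionInDoubleDual ℝ X (x k))}

/-!
Fix `v : X`. Two convex combinations of the `x k` with disjoint supports are at least `2c` apart.
So if some convex combination `w₀` lies within `c` of `v`, then every convex combination of the
`x k` with `k` beyond the support of `w₀` is at distance at least `c` from `v`. Hahn–Banach
separates `ball v c` from the convex hull of that tail by a functional `g` with `‖g‖ ≤ 1` and
`g v + c ≤ g (x k)` for all large `k`; this inequality passes to the weak* cluster point `y`,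
giving `c ≤ (y - v) g ≤ ‖y - v‖`.
-/

lemma exists_sum_eq_of_mem_convexHull_image {ι E : Type*} [AddCommGroup E] [Module ℝ E]
    {x : ι → E} {s : Set ι} {w : E} (hw : w ∈ convexHull ℝ (x '' s)) :
    ∃ (p : Finset ι) (μ : ι → ℝ), ↑p ⊆ s ∧ (∀ i ∈ p, 0 ≤ μ i) ∧ ∑ i ∈ p, μ i = 1 ∧
      ∑ i ∈ p, μ i • x i = w := by
  classical
  rw [Set.image_eq_range, convexHull_range_eq_exists_affineCombination] at hw
  obtain ⟨t, ν, hν₀, hν₁, rfl⟩ := hw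
  let μ : ι → ℝ := fun i => if h : i ∈ s then ν ⟨i, h⟩ else 0
  have hμ : ∀ i : s, μ i = ν i := fun i => dif_pos i.2
  refine ⟨t.map (Function.Embedding.subtype _), μ, by simp, ?_, ?_, ?_⟩
  · simpa only [Finset.forall_mem_map, Function.Embedding.coe_subtype, hμ] using hν₀
  · simpa only [Finset.sum_map, Function.Embedding.coe_subtype, hμ] using hν₁
  · rw [affineCombination_eq_linear_combination _ _ _ hν₁]
    simp only [Finset.sum_map, Function.Embedding.coe_subtype, hμ]

section DominatesL1Basis

variable {ι E : Type*} [NormedAddCommGroup E] [NormedSpace ℝ E]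

def DominatesL1Basis (c : ℝ) (x : ι → E) : Prop :=
  ∀ (s : Finset ι) (α : ι → ℝ), c * ∑ i ∈ s, |α i| ≤ ‖∑ i ∈ s, α i • x i‖

lemma dominatesL1Basis_of_forall_range {c : ℝ} {x : ℕ → E}
    (hx : ∀ (n : ℕ) (α : ℕ → ℝ),
      c * ∑ j ∈ Finset.range n, |α j| ≤ ‖∑ j ∈ Finset.range n, α j • x j‖) :
    DominatesL1Basis c x := by
  classical
  intro s α
  obtain ⟨n, hn⟩ := s.exists_nat_subset_range
  simpa [apply_ite, ite_smul, Finset.sum_ite_mem, Finset.inter_eq_right.2 hn]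
    using hx n fun j => if j ∈ s then α j else 0

lemma DominatesL1Basis.two_mul_le_norm_sub {c : ℝ} {x : ι → E} (hx : DominatesL1Basis c x)
    {s t : Set ι} (hst : Disjoint s t) {a b : E} (ha : a ∈ convexHull ℝ (x '' s))
    (hb : b ∈ convexHull ℝ (x '' t)) : 2 * c ≤ ‖a - b‖ := by
  classical
  obtain ⟨p, μ, hps, hμ₀, hμ₁, rfl⟩ := exists_sum_eq_of_mem_convexHull_image ha
  obtain ⟨q, ν, hqt, hν₀, hν₁, rfl⟩ := exists_sum_eq_of_mem_convexHull_image hb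
  have hpq : Disjoint p q := by
    rw [← Finset.disjoint_coe]; exact hst.mono hps hqt
  let α : ι → ℝ := fun i => if i ∈ p then μ i else -ν i
  have hα_p : ∀ i ∈ p, α i = μ i := fun i hi => if_pos hi
  have hα_q : ∀ i ∈ q, α i = -ν i := fun i hi => if_neg (Finset.disjoint_right.1 hpq hi)
  have hsum : ∑ i ∈ p ∪ q, α i • x i = ∑ i ∈ p, μ i • x i - ∑ i ∈ q, ν i • x i := by
    rw [Finset.sum_union hpq, sub_eq_add_neg, ← Finset.sum_neg_distrib]
    congr 1
    · exact Finset.sum_congr rfl fun i hi => by rw [hα_p i hi]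
    · exact Finset.sum_congr rfl fun i hi => by rw [hα_q i hi, neg_smul]
  have habs : ∑ i ∈ p ∪ q, |α i| = 2 := by
    rw [Finset.sum_union hpq, ← one_add_one_eq_two]
    congr 1
    · rw [← hμ₁]
      exact Finset.sum_congr rfl fun i hi => by rw [hα_p i hi, abs_of_nonneg (hμ₀ i hi)]
    · rw [← hν₁]
      exact Finset.sum_congr rfl fun i hi => by rw [hα_q i hi, abs_neg, abs_of_nonneg (hν₀ i hi)]
  have := hx (p ∪ q) α
  rwa [hsum, habs, mul_comm] at this

lemma DominatesL1Basis.exists_le_dist_convexHull_image_Ici {c : ℝ} {x : ℕ → E}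
    (hx : DominatesL1Basis c x) (v : E) :
    ∃ N, ∀ w ∈ convexHull ℝ (x '' Set.Ici N), c ≤ dist w v := by
  by_cases h : ∀ w ∈ convexHull ℝ (x '' Set.Ici 0), c ≤ dist w v
  · exact ⟨0, h⟩
  push Not at h
  obtain ⟨w₀, hw₀, hw₀v⟩ := h
  obtain ⟨p, μ, -, hμ₀, hμ₁, rfl⟩ := exists_sum_eq_of_mem_convexHull_image hw₀
  obtain ⟨N, hN⟩ := p.exists_nat_subset_range
  refine ⟨N, fun w hw => ?_⟩
  have hw₀N : ∑ i ∈ p, μ i • x i ∈ convexHull ℝ (x '' Set.Iio N) :=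
    (convex_convexHull ℝ _).sum_mem hμ₀ hμ₁ fun i hi =>
      subset_convexHull ℝ _ (Set.mem_image_of_mem x (Finset.mem_range.1 (hN hi)))
  have := hx.two_mul_le_norm_sub (Set.Iio_disjoint_Ici le_rfl) hw₀N hw
  rw [← dist_eq_norm] at this
  linarith [dist_triangle_right (∑ i ∈ p, μ i • x i) w v]

end DominatesL1Basis

lemma Convex.exists_norm_le_one_add_le_of_le_dist {E : Type*} [NormedAddCommGroup E]
    [NormedSpace ℝ E] {T : Set E} (hT : Convex ℝ T) {v : E} {c : ℝ} (hc : 0 < c)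
    (hTv : ∀ w ∈ T, c ≤ dist w v) :
    ∃ g : StrongDual ℝ E, ‖g‖ ≤ 1 ∧ ∀ w ∈ T, c + g v ≤ g w := by
  have hdisj : Disjoint (Metric.ball v c) T :=
    Set.disjoint_left.2 fun w hw hwT => (hTv w hwT).not_gt (Metric.mem_ball.1 hw)
  obtain ⟨f, u, hfu, huf⟩ :=
    geometric_hahn_banach_open (convex_ball v c) Metric.isOpen_ball hT hdisj
  set r := u - f v
  have hr : 0 < r := sub_pos.2 (hfu v (Metric.mem_ball_self hc))
  have hf_closedBall : ∀ z ∈ Metric.closedBall (0 : E) c, f z ≤ r := by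
    rw [← closure_ball 0 hc.ne']
    refine closure_minimal (fun z hz => ?_) (isClosed_le f.continuous continuous_const)
    have := hfu (v + z) (by simpa using hz)
    rw [map_add] at this
    show f z ≤ r
    linarith
  have hf : ‖f‖ ≤ r / c := f.opNorm_bound_of_ball_bound hc r fun z hz => by
    have := hf_closedBall (-z) (by simpa using hz)
    rw [map_neg] at this
    exact abs_le.2 ⟨by linarith, hf_closedBall z hz⟩
  refine ⟨(c / r) • f, ?_, fun w hw => ?_⟩
  · calc ‖(c / r) • f‖ = c / r * ‖f‖ := by rw [norm_smul, Real.norm_of_nonneg (by positivity)]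
      _ ≤ c / r * (r / c) := by gcongr
      _ = 1 := by field_simp
  · have hrw : r + f v ≤ f w := by linarith [huf w hw]
    calc c + ((c / r) • f) v = c / r * (r + f v) := by
          change c + c / r * f v = _; field_simp
      _ ≤ c / r * f w := by gcongr
      _ = ((c / r) • f) w := rfl

lemma le_apply_of_mem_weakStarClusterPoints {X : Type*} [NormedAddCommGroup X]
    [NormedSpace ℝ X] {x : ℕ → X} {y : StrongDual ℝ (StrongDual ℝ X)}
    (hy : y ∈ weakStarClusterPoints x) (g : StrongDual ℝ X) {a : ℝ}
    (h : ∀ᶠ k in atTop, a ≤ g (x k)) : a ≤ y g :=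
  isClosed_Ici.mem_of_mapClusterPt (hy.tendsto_comp ((WeakDual.eval_continuous g).tendsto _)) h

theorem statement1_general {X : Type*} [NormedAddCommGroup X] [NormedSpace ℝ X]
    (x : ℕ → X) (c : ℝ) (hc : 0 < c)
    (hl : ∀ (n : ℕ) (α : ℕ → ℝ),
      c * ∑ j ∈ Finset.range n, |α j| ≤ ‖∑ j ∈ Finset.range n, α j • x j‖) :
    ∀ y ∈ weakStarClusterPoints x,
      (∀ v : X, c ≤ ‖y - inclusionInDoubleDual ℝ X v‖) ∧
      c ≤ Metric.infDist y (Set.range fun v : X => inclusionInDoubleDual ℝ X v) := by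
  intro y hy
  have hdist : ∀ v : X, c ≤ ‖y - inclusionInDoubleDual ℝ X v‖ := by
    intro v
    obtain ⟨N, hN⟩ := (dominatesL1Basis_of_forall_range hl).exists_le_dist_convexHull_image_Ici v
    obtain ⟨g, hg, hgN⟩ :=
      (convex_convexHull ℝ _).exists_norm_le_one_add_le_of_le_dist hc hN
    have hyg : c + g v ≤ y g := le_apply_of_mem_weakStarClusterPoints hy g <|
      eventually_atTop.2 ⟨N, fun k hk => hgN _ (subset_convexHull ℝ _ ⟨k, hk, rfl⟩)⟩
    calc c ≤ y g - g v := by linarith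
      _ = (y - inclusionInDoubleDual ℝ X v) g := rfl
      _ ≤ ‖y - inclusionInDoubleDual ℝ X v‖ * ‖g‖ :=
          (Real.le_norm_self _).trans (ContinuousLinearMap.le_opNorm _ _)
      _ ≤ ‖y - inclusionInDoubleDual ℝ X v‖ := mul_le_of_le_one_right (by positivity) hg
  refine ⟨hdist, (Metric.le_infDist (Set.range_nonempty _)).2 ?_⟩
  rintro _ ⟨v, rfl⟩
  exact (hdist v).trans_eq (dist_eq_norm y _).symm

/-- If a bounded sequence `(x_n)` in a Banach space dominates the `ℓ¹` basis
with constant `c > 0`, then every weak* cluster point `x**` of `(x_n)` in `X**` satisfies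
`‖x** - x‖ ≥ c` for every `x ∈ X`, i.e. `dist (x**, X) ≥ c`. -/
theorem statement1 {X : Type*} [NormedAddCommGroup X] [NormedSpace ℝ X] [CompleteSpace X]
    (x : ℕ → X) (hb : ∃ M : ℝ, ∀ k, ‖x k‖ ≤ M) (c : ℝ) (hc : 0 < c)
    (hl : ∀ (n : ℕ) (α : ℕ → ℝ),
      c * ∑ j ∈ Finset.range n, |α j| ≤ ‖∑ j ∈ Finset.range n, α j • x j‖) :
    ∀ y ∈ weakStarClusterPoints x,
      (∀ v : X, c ≤ ‖y - inclusionInDoubleDual ℝ X v‖) ∧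
      c ≤ Metric.infDist y (Set.range fun v : X => inclusionInDoubleDual ℝ X v) :=
  statement1_general x c hc hl
end

section
/- If X is an L-embedded Banach space, then for every bounded sequence (x_k) in X, 2·d̂(clust_{X**}(x_k), X) ≤ δ_X(x_k). -/
open Filter Topology NormedSpace

/-- `δ_X (x k)`: the (norm) diameter of the set of weak* cluster points of `(x k)` in `X**`. -/
noncomputable def deltaSeq {X : Type*} [NormedAddCommGroup X] [NormedSpace ℝ X]
    (x : ℕ → X) : ℝ :=
  Metric.diam (weakStarClusterPoints x)

/-- `d̂(A, X)`: the non-symmetrized Hausdorff distance from `A ⊆ X**` to (the canonical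
image of) `X`, i.e. `sup_{a ∈ A} dist (a, X)`. -/
noncomputable def dHat {X : Type*} [NormedAddCommGroup X] [NormedSpace ℝ X]
    (A : Set (StrongDual ℝ (StrongDual ℝ X))) : ℝ :=
  sSup ((fun y => Metric.infDist y (Set.range fun v : X => inclusionInDoubleDual ℝ X v)) '' A)

/-- `X` is `L`-embedded: there is a linear projection of `X**` onto the canonical copy of `X`
satisfying `‖y‖ = ‖Py‖ + ‖y - Py‖` for all `y ∈ X**`. -/
def IsLEmbedded (X : Type*) [NormedAddCommGroup X] [NormedSpace ℝ X] : Prop :=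
  ∃ P : StrongDual ℝ (StrongDual ℝ X) →ₗ[ℝ] StrongDual ℝ (StrongDual ℝ X),
    (∀ y, P (P y) = P y) ∧
    Set.range P = Set.range (fun v : X => inclusionInDoubleDual ℝ X v) ∧
    ∀ y, ‖y‖ = ‖P y‖ + ‖y - P y‖


/-!
Let `t` be a weak* cluster point of `(x k)` and `s = t - P t`; since `P t ∈ X`, it suffices to find
cluster points `p, q` with `‖p - q‖ ≥ b` for every `b < 2 ‖s‖`. The L-decomposition gives
`‖v + s‖ = ‖v‖ + ‖s‖` for `v ∈ X`, and the bidual norm is weak* lower semicontinuous, so for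
`m, n` large and well chosen, `‖v + x m - x n‖ ≳ ‖v‖ + 2 ‖s‖`, uniformly for `v` in a compact set.
Adding such differences one at a time keeps their convex hull at distance nearly `2 ‖s‖` from `0`,
so Hahn–Banach yields `g` in the unit ball of `X*` with `g (x m - x n) ≥ b` along pairs of indices
tending to infinity; weak* cluster points `p, q` of `x` along these pairs satisfy
`‖p - q‖ ≥ p g - q g ≥ b`.
-/

open Metric Bornology Pointwise

section LProjection

variable {Y F : Type*} [NormedAddCommGroup Y] [FunLike F Y Y] [AddMonoidHomClass F Y Y] {P : F}

theorem norm_sub_eq_of_map_eq_self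
    (hPnorm : ∀ y, ‖y‖ = ‖P y‖ + ‖y - P y‖) {w : Y} (hw : P w = w) (t : Y) :
    ‖w - t‖ = ‖w - P t‖ + ‖t - P t‖ := by
  rw [hPnorm (w - t), map_sub, hw, sub_sub_sub_cancel_left, norm_sub_rev (P t)]

theorem norm_map_sub_sub_eq_of_map_eq_self (hPP : ∀ y, P (P y) = P y)
    (hPnorm : ∀ y, ‖y‖ = ‖P y‖ + ‖y - P y‖) {w : Y} (hw : P w = w) (t : Y) :
    ‖P t - w - t‖ = ‖w‖ + ‖t - P t‖ := by
  rw [norm_sub_eq_of_map_eq_self hPnorm (by rw [map_sub, hPP, hw]) t, sub_sub_cancel_left,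
    norm_neg]

end LProjection

section NormedSpace

variable {X : Type*} [NormedAddCommGroup X] [NormedSpace ℝ X]

theorem exists_norm_le_one_forall_le_apply {C : Set X} (hC : Convex ℝ C) {b : ℝ} (hb : 0 < b)
    (h : ∀ z ∈ C, b ≤ ‖z‖) :
    ∃ g : StrongDual ℝ X, ‖g‖ ≤ 1 ∧ ∀ z ∈ C, b ≤ g z := by
  have hdisj : Disjoint (ball (0 : X) b) C :=
    Set.disjoint_left.2 fun z hz hzC => (mem_ball_zero_iff.1 hz).not_ge (h z hzC)
  obtain ⟨f, u, hfu, huf⟩ := geometric_hahn_banach_open (convex_ball 0 b) isOpen_ball hC hdisj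
  have hu : 0 < u := by simpa using hfu 0 (mem_ball_self hb)
  have hle : ∀ v ∈ closedBall (0 : X) b, f v ≤ u := by
    rw [← closure_ball 0 hb.ne']
    exact closure_minimal (fun v hv => (hfu v hv).le) (isClosed_le f.continuous continuous_const)
  have hf : ‖f‖ ≤ u / b := by
    refine ContinuousLinearMap.opNorm_le_of_unit_norm (by positivity) fun v hv => ?_
    have h₁ := hle (b • v) (by simp [norm_smul, hv, abs_of_pos hb])
    have h₂ := hle (b • -v) (by simp [norm_smul, hv, abs_of_pos hb])
    simp only [map_smul, map_neg, smul_eq_mul] at h₁ h₂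
    rw [Real.norm_eq_abs, le_div_iff₀ hb]
    rcases abs_cases (f v) with ⟨h, -⟩ | ⟨h, -⟩ <;> rw [h] <;> linarith
  refine ⟨(b / u) • f, ?_, fun z hz => ?_⟩
  · rw [norm_smul, Real.norm_eq_abs, abs_of_pos (by positivity)]
    calc b / u * ‖f‖ ≤ b / u * (u / b) := by gcongr
    _ = 1 := by field_simp
  · rw [smul_apply, smul_eq_mul, div_mul_eq_mul_div, le_div_iff₀ hu]
    nlinarith [huf z hz]

theorem le_norm_of_mem_convexHull_insert {U : Set X} {d : X} {β β' B γ : ℝ}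
    (hU : ∀ y ∈ convexHull ℝ U, β ≤ ‖y‖) (hβ : 0 ≤ β) (hd : ‖d‖ ≤ B) (hγ : 0 < γ)
    (hγβ : γ * (β + B) ≤ β - β')
    (hK : ∀ w ∈ insert 0 (Set.Icc 0 γ⁻¹ • convexHull ℝ U), ‖w‖ + β' ≤ ‖w + d‖) :
    ∀ z ∈ convexHull ℝ (insert d U), β' ≤ ‖z‖ := by
  have hβ' : β' ≤ β := by nlinarith [norm_nonneg d]
  rcases U.eq_empty_or_nonempty with rfl | hne
  · simpa using hK 0 (Set.mem_insert _ _)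
  intro z hz
  rw [convexHull_insert hne, mem_convexJoin] at hz
  obtain ⟨d', hd', y, hy, hz⟩ := hz
  rw [Set.mem_singleton_iff.1 hd'] at hz
  obtain ⟨a, c, ha, hc, hac, rfl⟩ := hz
  have hyβ := hU y hy
  rcases le_or_gt a γ with hsmall | hlarge
  · -- the new direction carries little weight: triangle inequality
    have hβB : a * (β + B) ≤ γ * (β + B) := by
      gcongr; linarith [norm_nonneg d]
    calc β' ≤ c * β - a * B := by nlinarith
    _ ≤ ‖c • y‖ - ‖a • d‖ := by
        rw [norm_smul, norm_smul, Real.norm_of_nonneg ha, Real.norm_of_nonneg hc]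
        gcongr
    _ ≤ ‖a • d + c • y‖ := by
        have := norm_sub_le (a • d + c • y) (a • d)
        rw [add_sub_cancel_left] at this
        linarith
  · -- rescale so that the new direction has coefficient one
    have ha0 : 0 < a := hγ.trans hlarge
    have hw : (a⁻¹ * c) • y ∈ insert 0 (Set.Icc 0 γ⁻¹ • convexHull ℝ U) := by
      refine Set.mem_insert_of_mem _ (Set.smul_mem_smul ⟨by positivity, ?_⟩ hy)
      calc a⁻¹ * c ≤ a⁻¹ * 1 := by gcongr; linarith
      _ ≤ γ⁻¹ := by rw [mul_one]; exact inv_anti₀ hγ hlarge.le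
    have hz : a • d + c • y = a • ((a⁻¹ * c) • y + d) := by
      rw [smul_add, smul_smul, ← mul_assoc, mul_inv_cancel₀ ha0.ne', one_mul, add_comm]
    have hKw := hK _ hw
    rw [norm_smul, Real.norm_of_nonneg (by positivity)] at hKw
    rw [hz, norm_smul, Real.norm_of_nonneg ha]
    calc β' = c * β' + a * β' := by rw [← add_mul, add_comm, hac, one_mul]
    _ ≤ c * ‖y‖ + a * β' := by gcongr; linarith
    _ = a * (a⁻¹ * c * ‖y‖ + β') := by field_simp
    _ ≤ a * ‖(a⁻¹ * c) • y + d‖ := by gcongr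

end NormedSpace

theorem MapClusterPt.frequently_forall_lt_norm_sub {E α ι : Type*} [NormedAddCommGroup E]
    [NormedSpace ℝ E] [Finite ι] {l : Filter α} {u : α → StrongDual ℝ E} {t : StrongDual ℝ E}
    (ht : MapClusterPt (StrongDual.toWeakDual t) l fun a => StrongDual.toWeakDual (u a))
    (w : ι → StrongDual ℝ E) (r : ι → ℝ) (hr : ∀ i, r i < ‖w i - t‖) :
    ∃ᶠ a in l, ∀ i, r i < ‖w i - u a‖ := by
  -- closed balls of the dual are weak* closed, i.e. the dual norm is weak* lower semicontinuous
  have hopen : IsOpen (⋂ i, (WeakDual.toStrongDual ⁻¹' closedBall (w i) (r i))ᶜ) :=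
    isOpen_iInter_of_finite fun i => (WeakDual.isClosed_closedBall (w i) (r i)).isOpen_compl
  have hmem :
      StrongDual.toWeakDual t ∈ ⋂ i, (WeakDual.toStrongDual ⁻¹' closedBall (w i) (r i))ᶜ := by
    simpa [dist_eq_norm, norm_sub_rev] using hr
  refine (mapClusterPt_iff_frequently.1 ht _ (hopen.mem_nhds hmem)).mono fun a ha => ?_
  simpa [dist_eq_norm, norm_sub_rev] using ha

section Bidual

variable {X : Type*} [NormedAddCommGroup X] [NormedSpace ℝ X]

local notation "ι" => inclusionInDoubleDual ℝ X

theorem norm_inclusionInDoubleDual (v : X) : ‖ι v‖ = ‖v‖ :=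
  (inclusionInDoubleDualLi ℝ).norm_map v

theorem norm_le_of_mem_weakStarClusterPoints {x : ℕ → X} {M : ℝ} (hM : ∀ k, ‖x k‖ ≤ M)
    {p : StrongDual ℝ (StrongDual ℝ X)} (hp : p ∈ weakStarClusterPoints x) : ‖p‖ ≤ M := by
  simpa using (WeakDual.isClosed_closedBall 0 M).mem_of_mapClusterPt hp
    (Eventually.of_forall fun k => by simpa [norm_inclusionInDoubleDual] using hM k)

theorem isBounded_weakStarClusterPoints {x : ℕ → X} {M : ℝ} (hM : ∀ k, ‖x k‖ ≤ M) :
    IsBounded (weakStarClusterPoints x) :=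
  isBounded_iff_forall_norm_le.2 ⟨M, fun _ => norm_le_of_mem_weakStarClusterPoints hM⟩

theorem exists_mem_weakStarClusterPoints_le_sub_apply {x : ℕ → X} {M : ℝ}
    (hM : ∀ k, ‖x k‖ ≤ M) (g : StrongDual ℝ X) {b : ℝ}
    (h : ∀ N, ∃ m n, N ≤ m ∧ N ≤ n ∧ b ≤ g (x m) - g (x n)) :
    ∃ p ∈ weakStarClusterPoints x, ∃ q ∈ weakStarClusterPoints x, b ≤ p g - q g := by
  set B := WeakDual.toStrongDual ⁻¹' closedBall (0 : StrongDual ℝ (StrongDual ℝ X)) M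
  set K := (B ×ˢ B) ∩ {φψ | b ≤ φψ.1 g - φψ.2 g}
  have hK : IsCompact K :=
    ((WeakDual.isCompact_closedBall _ _).prod (WeakDual.isCompact_closedBall _ _)).inter_right
      (isClosed_le continuous_const
        (((WeakDual.eval_continuous g).comp continuous_fst).sub
          ((WeakDual.eval_continuous g).comp continuous_snd)))
  let u : ℕ → WeakDual ℝ (StrongDual ℝ X) := fun k =>
    StrongDual.toWeakDual (ι (x k))
  have hu : ∀ k, u k ∈ B := fun k => by
    change dist (ι (x k)) 0 ≤ M
    exact (dist_zero_right (ι (x k))).trans_le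
      ((norm_inclusionInDoubleDual _).trans_le (hM k))
  have hfreq : ∃ᶠ mn : ℕ × ℕ in atTop, (u mn.1, u mn.2) ∈ K := by
    refine frequently_atTop.2 fun N => ?_
    obtain ⟨m, n, hm, hn, hmn⟩ := h (max N.1 N.2)
    exact ⟨(m, n), Prod.mk_le_mk.2 ⟨le_of_max_le_left hm, le_of_max_le_right hn⟩,
      ⟨hu m, hu n⟩, hmn⟩
  obtain ⟨⟨p, q⟩, ⟨-, hpq⟩, hcl⟩ := hK.exists_mapClusterPt_of_frequently hfreq
  have htend : Tendsto (Prod.fst : ℕ × ℕ → ℕ) atTop atTop ∧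
      Tendsto (Prod.snd : ℕ × ℕ → ℕ) atTop atTop := by
    rw [← prod_atTop_atTop_eq]; exact ⟨tendsto_fst, tendsto_snd⟩
  exact ⟨WeakDual.toStrongDual p,
    (hcl.continuousAt_comp continuous_fst.continuousAt).of_comp htend.1,
    WeakDual.toStrongDual q,
    (hcl.continuousAt_comp continuous_snd.continuousAt).of_comp htend.2, hpq⟩

theorem exists_lt_norm_add_sub_of_finite
    {P : StrongDual ℝ (StrongDual ℝ X) →ₗ[ℝ] StrongDual ℝ (StrongDual ℝ X)}
    (hPP : ∀ y, P (P y) = P y) (hPι : ∀ v, P (ι v) = ι v)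
    (hPnorm : ∀ y, ‖y‖ = ‖P y‖ + ‖y - P y‖) {x : ℕ → X}
    {t : StrongDual ℝ (StrongDual ℝ X)} (ht : t ∈ weakStarClusterPoints x)
    {β : ℝ} (hβ : β < 2 * ‖t - P t‖) {J : Type*} [Finite J] (y : J → X) (N : ℕ) :
    ∃ m n, N ≤ m ∧ N ≤ n ∧ ∀ j, ‖y j‖ + β < ‖y j + (x m - x n)‖ := by
  have hnorm₁ : ∀ v, ‖P t - ι v - t‖ = ‖ι v‖ + ‖t - P t‖ := fun v =>
    norm_map_sub_sub_eq_of_map_eq_self hPP hPnorm (hPι v) t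
  have hnorm₂ : ∀ v, ‖ι v - t‖ = ‖ι v - P t‖ + ‖t - P t‖ := fun v =>
    norm_sub_eq_of_map_eq_self hPnorm (hPι v) t
  have hnorm₃ : ∀ v w, ‖P t - ι v - ι w‖ = ‖ι (v + w) - P t‖ := fun v w => by
    rw [show P t - ι v - ι w = -(ι (v + w) - P t) by rw [map_add]; abel]
    exact norm_neg (ι (v + w) - P t)
  -- `ι (x m)` is weak* close to `t = P t + (t - P t)`, so `ι (v + x m) - P t` is nearly as long
  -- as `ι v + (t - P t)`, whose norm is `‖v‖ + ‖t - P t‖` by the L-decomposition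
  obtain ⟨m, hm, hxm⟩ := frequently_atTop.1 (ht.frequently_forall_lt_norm_sub
    (fun j => P t - ι (y j)) (fun j => ‖y j‖ + β / 2) fun j => by
      rw [hnorm₁, norm_inclusionInDoubleDual]
      linarith) N
  -- and in the same way `ι (v + x m - x n)` is nearly as long as `ι (v + x m) - P t - (t - P t)`
  obtain ⟨n, hn, hxn⟩ := frequently_atTop.1 (ht.frequently_forall_lt_norm_sub
    (fun j => ι (y j + x m)) (fun j => ‖y j‖ + β) fun j => by
      have h := hxm j
      rw [hnorm₃] at h
      rw [hnorm₂]
      linarith) N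
  refine ⟨m, n, hm, hn, fun j => ?_⟩
  have h := hxn j
  rw [← map_sub, norm_inclusionInDoubleDual, add_sub_assoc] at h
  exact h

theorem exists_le_norm_add_sub_of_isCompact
    {P : StrongDual ℝ (StrongDual ℝ X) →ₗ[ℝ] StrongDual ℝ (StrongDual ℝ X)}
    (hPP : ∀ y, P (P y) = P y) (hPι : ∀ v, P (ι v) = ι v)
    (hPnorm : ∀ y, ‖y‖ = ‖P y‖ + ‖y - P y‖) {x : ℕ → X}
    {t : StrongDual ℝ (StrongDual ℝ X)} (ht : t ∈ weakStarClusterPoints x)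
    {β : ℝ} (hβ : β < 2 * ‖t - P t‖) {K : Set X} (hK : IsCompact K) (N : ℕ) :
    ∃ m n, N ≤ m ∧ N ≤ n ∧ ∀ w ∈ K, ‖w‖ + β ≤ ‖w + (x m - x n)‖ := by
  obtain ⟨δ, hδ, hδβ⟩ : ∃ δ > 0, β + 2 * δ < 2 * ‖t - P t‖ :=
    ⟨(2 * ‖t - P t‖ - β) / 4, by linarith, by linarith⟩
  obtain ⟨Y, -, hYfin, hKY⟩ := hK.finite_cover_balls hδ
  have := hYfin.to_subtype
  obtain ⟨m, n, hm, hn, hY⟩ := exists_lt_norm_add_sub_of_finite hPP hPι hPnorm ht hδβ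
    (fun y : Y => (y : X)) N
  refine ⟨m, n, hm, hn, fun w hw => ?_⟩
  obtain ⟨y, hy, hwy⟩ := Set.mem_iUnion₂.1 (hKY hw)
  have h₁ := hY ⟨y, hy⟩
  have h₂ : ‖y + (x m - x n)‖ - ‖w + (x m - x n)‖ ≤ ‖w - y‖ := by
    simpa [norm_sub_rev] using norm_sub_norm_le (y + (x m - x n)) (w + (x m - x n))
  have h₃ : ‖w‖ - ‖y‖ ≤ ‖w - y‖ := norm_sub_norm_le w y
  rw [mem_ball, dist_eq_norm] at hwy
  linarith

theorem exists_forall_mem_convexHull_insert_le_norm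
    {P : StrongDual ℝ (StrongDual ℝ X) →ₗ[ℝ] StrongDual ℝ (StrongDual ℝ X)}
    (hPP : ∀ y, P (P y) = P y) (hPι : ∀ v, P (ι v) = ι v)
    (hPnorm : ∀ y, ‖y‖ = ‖P y‖ + ‖y - P y‖) {x : ℕ → X} {M : ℝ} (hM : ∀ k, ‖x k‖ ≤ M)
    {t : StrongDual ℝ (StrongDual ℝ X)} (ht : t ∈ weakStarClusterPoints x)
    {U : Set X} (hU : U.Finite) {β β' : ℝ} (hUβ : ∀ y ∈ convexHull ℝ U, β ≤ ‖y‖) (hβ : 0 ≤ β)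
    (hβ'β : β' < β) (hβ' : β' < 2 * ‖t - P t‖) (N : ℕ) :
    ∃ m n, N ≤ m ∧ N ≤ n ∧ ∀ z ∈ convexHull ℝ (insert (x m - x n) U), β' ≤ ‖z‖ := by
  have hM0 : 0 ≤ M := (norm_nonneg _).trans (hM 0)
  set γ := (β - β') / (β + 2 * M + 1)
  have hγ : 0 < γ := div_pos (by linarith) (by linarith)
  have hK : IsCompact (insert 0 (Set.Icc 0 γ⁻¹ • convexHull ℝ U)) :=
    (isCompact_Icc.smul_set (hU.isCompact_convexHull ℝ)).insert 0
  obtain ⟨m, n, hm, hn, hmn⟩ := exists_le_norm_add_sub_of_isCompact hPP hPι hPnorm ht hβ' hK N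
  refine ⟨m, n, hm, hn, le_norm_of_mem_convexHull_insert hUβ hβ (B := 2 * M) ?_ hγ ?_ hmn⟩
  · linarith [norm_sub_le (x m) (x n), hM m, hM n]
  · rw [div_mul_eq_mul_div, div_le_iff₀ (by linarith)]
    nlinarith

theorem exists_forall_mem_convexHull_le_norm
    {P : StrongDual ℝ (StrongDual ℝ X) →ₗ[ℝ] StrongDual ℝ (StrongDual ℝ X)}
    (hPP : ∀ y, P (P y) = P y) (hPι : ∀ v, P (ι v) = ι v)
    (hPnorm : ∀ y, ‖y‖ = ‖P y‖ + ‖y - P y‖) {x : ℕ → X} {M : ℝ} (hM : ∀ k, ‖x k‖ ≤ M)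
    {t : StrongDual ℝ (StrongDual ℝ X)} (ht : t ∈ weakStarClusterPoints x)
    {b : ℝ} (hb : 0 < b) (hbt : b < 2 * ‖t - P t‖) :
    ∃ U : Set X, (∀ z ∈ convexHull ℝ U, b ≤ ‖z‖) ∧
      ∀ N, ∃ m n, N ≤ m ∧ N ≤ n ∧ x m - x n ∈ U := by
  classical
  -- the bound degrades from `β 0 = 2 ‖t - P t‖` towards `b` as differences are added
  let β : ℕ → ℝ := fun J => b + (2 * ‖t - P t‖ - b) / 2 ^ J
  have hβb : ∀ J, b < β J := fun J => lt_add_of_pos_right b (by positivity)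
  have hβsucc : ∀ J, β (J + 1) < β J := fun J => by
    have := div_lt_div_of_pos_left (sub_pos.2 hbt) (by positivity)
      (pow_lt_pow_right₀ one_lt_two (lt_add_one J))
    simp only [β]
    linarith
  have hβt : ∀ J, β (J + 1) < 2 * ‖t - P t‖ := fun J =>
    (strictAnti_nat_of_succ_lt hβsucc J.succ_pos).trans_eq (by simp [β])
  -- stated for every `V`, so that `choose` yields a total step function
  have step : ∀ (J : ℕ) (V : Finset X), ∃ d, (∃ m n, J ≤ m ∧ J ≤ n ∧ x m - x n = d) ∧
      ((∀ y ∈ convexHull ℝ (V : Set X), β J ≤ ‖y‖) →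
        ∀ z ∈ convexHull ℝ (insert d (V : Set X)), β (J + 1) ≤ ‖z‖) := by
    intro J V
    by_cases hV : ∀ y ∈ convexHull ℝ (V : Set X), β J ≤ ‖y‖
    · obtain ⟨m, n, hm, hn, h⟩ := exists_forall_mem_convexHull_insert_le_norm hPP hPι hPnorm
        hM ht V.finite_toSet hV (hb.trans (hβb J)).le (hβsucc J) (hβt J) J
      exact ⟨_, ⟨m, n, hm, hn, rfl⟩, fun _ => h⟩
    · exact ⟨_, ⟨J, J, le_rfl, le_rfl, rfl⟩, fun h => absurd h hV⟩
  choose next hnext_sub hnext using step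
  let V : ℕ → Finset X := fun J =>
    Nat.rec (motive := fun _ => Finset X) ∅ (fun J V => insert (next J V) V) J
  have hV : ∀ J, ∀ y ∈ convexHull ℝ (V J : Set X), β J ≤ ‖y‖ := by
    intro J
    induction J with
    | zero => simp [V]
    | succ J ih => simpa [V] using hnext J (V J) ih
  have hVmono : Monotone fun J => (V J : Set X) :=
    monotone_nat_of_le_succ fun J => by simp [V]
  refine ⟨⋃ J, (V J : Set X), fun z hz => ?_, fun N => ?_⟩
  · rw [convexHull_eq_union_convexHull_finite_subsets, Set.mem_iUnion₂] at hz
    obtain ⟨T, hT, hzT⟩ := hz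
    obtain ⟨J, hJ⟩ := hVmono.directed_le.exists_mem_subset_of_finset_subset_biUnion hT
    exact (hβb J).le.trans (hV J z (convexHull_mono hJ hzT))
  · obtain ⟨m, n, hm, hn, hd⟩ := hnext_sub N (V N)
    exact ⟨m, n, hm, hn, Set.mem_iUnion.2 ⟨N + 1, by simp [V, hd]⟩⟩

theorem two_mul_norm_sub_le_deltaSeq
    {P : StrongDual ℝ (StrongDual ℝ X) →ₗ[ℝ] StrongDual ℝ (StrongDual ℝ X)}
    (hPP : ∀ y, P (P y) = P y) (hPι : ∀ v, P (ι v) = ι v)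
    (hPnorm : ∀ y, ‖y‖ = ‖P y‖ + ‖y - P y‖) {x : ℕ → X} {M : ℝ} (hM : ∀ k, ‖x k‖ ≤ M)
    {t : StrongDual ℝ (StrongDual ℝ X)} (ht : t ∈ weakStarClusterPoints x) :
    2 * ‖t - P t‖ ≤ deltaSeq x := by
  refine le_of_forall_lt_imp_le_of_dense fun b hbt => ?_
  rcases le_or_gt b 0 with hb | hb
  · exact hb.trans diam_nonneg
  obtain ⟨U, hU, hUx⟩ := exists_forall_mem_convexHull_le_norm hPP hPι hPnorm hM ht hb hbt
  obtain ⟨g, hg, hgU⟩ := exists_norm_le_one_forall_le_apply (convex_convexHull ℝ U) hb hU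
  obtain ⟨p, hp, q, hq, hpq⟩ := exists_mem_weakStarClusterPoints_le_sub_apply hM g fun N => by
    obtain ⟨m, n, hm, hn, hmn⟩ := hUx N
    exact ⟨m, n, hm, hn, by simpa using hgU _ (subset_convexHull ℝ U hmn)⟩
  calc b ≤ (p - q) g := hpq
    _ ≤ ‖p - q‖ := (le_abs_self _).trans ((p - q).unit_le_opNorm g hg)
    _ = dist p q := (dist_eq_norm p q).symm
    _ ≤ deltaSeq x := dist_le_diam_of_mem (isBounded_weakStarClusterPoints hM) hp hq

end Bidual

theorem statement3_general {X : Type*} [NormedAddCommGroup X] [NormedSpace ℝ X]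
    (hL : IsLEmbedded X) (x : ℕ → X) (hb : ∃ M : ℝ, ∀ k, ‖x k‖ ≤ M) :
    2 * dHat (weakStarClusterPoints x) ≤ deltaSeq x := by
  obtain ⟨M, hM⟩ := hb
  obtain ⟨P, hPP, hPrange, hPnorm⟩ := hL
  have hPι : ∀ v, P (inclusionInDoubleDual ℝ X v) = inclusionInDoubleDual ℝ X v := fun v => by
    obtain ⟨y, hy⟩ : inclusionInDoubleDual ℝ X v ∈ Set.range P := hPrange ▸ ⟨v, rfl⟩
    rw [← hy, hPP]
  have hdist : ∀ t ∈ weakStarClusterPoints x,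
      infDist t (Set.range fun v : X => inclusionInDoubleDual ℝ X v) ≤ deltaSeq x / 2 := by
    intro t ht
    have hPt : P t ∈ Set.range fun v : X => inclusionInDoubleDual ℝ X v := hPrange ▸ ⟨t, rfl⟩
    have := two_mul_norm_sub_le_deltaSeq hPP hPι hPnorm hM ht
    calc infDist t _ ≤ dist t (P t) := infDist_le_dist_of_mem hPt
      _ = ‖t - P t‖ := dist_eq_norm t (P t)
      _ ≤ deltaSeq x / 2 := by linarith
  have := Real.sSup_le (s := _ '' weakStarClusterPoints x) (Set.forall_mem_image.2 hdist)
    (div_nonneg diam_nonneg zero_le_two)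
  unfold dHat
  linarith

/-- If `X` is an `L`-embedded Banach space, then for every bounded sequence
`(x k)` in `X`, `2 · d̂(clust_{X**}(x_k), X) ≤ δ_X(x_k)`. -/
theorem statement3 {X : Type*} [NormedAddCommGroup X] [NormedSpace ℝ X] [CompleteSpace X]
    (hL : IsLEmbedded X) (x : ℕ → X) (hb : ∃ M : ℝ, ∀ k, ‖x k‖ ≤ M) :
    2 * dHat (weakStarClusterPoints x) ≤ deltaSeq x :=
  statement3_general hL x hb
end

section
/- Let X be the ℓ¹-sum of the spaces ℓ∞^n, n ∈ ℕ, and (x_k) the enumeration of all basis vectors e_j^n (1 ≤ j ≤ n). Then 0 is a weak cluster point of (x_k) in X: for every finite set g^1,…,g^m ∈ X* and every ε > 0 there exists a member x of the sequence with |g^i(x)| < ε for all i = 1,…,m. -/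
open Filter Topology NormedSpace

/-- The `ℓ¹`-sum of the finite-dimensional spaces `ℓ∞ⁿ = (Fin (n+1) → ℝ)` (sup norm). -/
abbrev LOneSumLinf : Type := lp (fun n : ℕ => Fin (n + 1) → ℝ) 1

/-- The basis vector `e_j^n` of the `n`-th summand `ℓ∞ⁿ`, viewed in the `ℓ¹`-sum. -/
noncomputable def basisVec (n : ℕ) (j : Fin (n + 1)) : LOneSumLinf :=
  lp.single 1 n (Pi.single j (1 : ℝ))

/-!
A functional `g` on the `ℓ¹`-sum restricts on the `n`-th block `ℓ∞ⁿ` to a functional of norm at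
most `‖g‖`, and testing it on the sign vector shows `∑ⱼ |g(eⱼⁿ)| ≤ ‖g‖`. Hence in block `n` at most
`(∑ᵢ ‖gⁱ‖)/ε` coordinates `j` have `|gⁱ(eⱼⁿ)| ≥ ε` for some `i`, and at most `N` coordinates are
enumerated before position `N`; a block with more coordinates than these two bounds together
contains a coordinate that is neither.
-/

open Finset

lemma lpSingle_eq_sum_smul_basisVec (n : ℕ) (s : Fin (n + 1) → ℝ) :
    (lp.single 1 n s : LOneSumLinf) = ∑ j, s j • basisVec n j := by
  conv_lhs => rw [pi_eq_sum_univ' s]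
  simp only [basisVec, ← lp.single_smul]
  exact map_sum (lp.singleAddMonoidHom 1 n) _ _

lemma sum_abs_apply_basisVec_le_opNorm (g : StrongDual ℝ LOneSumLinf) (n : ℕ) :
    ∑ j, |g (basisVec n j)| ≤ ‖g‖ := by
  set s : Fin (n + 1) → ℝ := fun j => SignType.sign (g (basisVec n j))
  have hs : ‖s‖ ≤ 1 := pi_norm_le_iff_of_nonneg zero_le_one |>.2 fun j => by
    rcases lt_trichotomy (g (basisVec n j)) 0 with h | h | h <;> simp [s, h]
  calc ∑ j, |g (basisVec n j)| = g (lp.single 1 n s) := by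
        simp only [lpSingle_eq_sum_smul_basisVec, map_sum, map_smul, smul_eq_mul, s, sign_mul_self]
    _ ≤ ‖g‖ * ‖(lp.single 1 n s : LOneSumLinf)‖ := (le_abs_self _).trans (g.le_opNorm _)
    _ ≤ ‖g‖ := by
        rw [lp.norm_single (by norm_num)]
        exact mul_le_of_le_one_right (norm_nonneg g) hs

lemma card_filter_exists_le_abs_le_ceil_div {ι α : Type*} [Fintype ι] [Fintype α]
    (f : ι → α → ℝ) {ε K : ℝ} (hε : 0 < ε) (hK : ∑ i, ∑ a, |f i a| ≤ K) :
    #{a | ∃ i, ε ≤ |f i a|} ≤ ⌈K / ε⌉₊ := by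
  have hmass :
      #{a | ∃ i, ε ≤ |f i a|} • ε ≤ ∑ a ∈ {a | ∃ i, ε ≤ |f i a|}, ∑ i, |f i a| :=
    card_nsmul_le_sum _ _ _ fun a ha => by
      obtain ⟨i, hi⟩ := (mem_filter.mp ha).2
      exact hi.trans (single_le_sum (f := fun i => |f i a|) (fun _ _ => abs_nonneg _) (mem_univ i))
  have hcard : (#{a | ∃ i, ε ≤ |f i a|} : ℝ) * ε ≤ K := by
    calc _ = #{a | ∃ i, ε ≤ |f i a|} • ε := (nsmul_eq_mul _ _).symm
      _ ≤ ∑ a, ∑ i, |f i a| :=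
        hmass.trans (sum_le_sum_of_subset_of_nonneg (subset_univ _) fun _ _ _ =>
          sum_nonneg fun _ _ => abs_nonneg _)
      _ = ∑ i, ∑ a, |f i a| := sum_comm
      _ ≤ K := hK
  exact_mod_cast ((le_div_iff₀ hε).mpr hcard).trans (Nat.le_ceil _)

lemma card_filter_lt_le_of_injective {α : Type*} [Fintype α] {φ : α → ℕ}
    (hφ : Function.Injective φ) (N : ℕ) : #{a | φ a < N} ≤ N := by
  simpa using card_le_card_of_injOn φ (t := range N) (fun a ha => by simpa using ha) hφ.injOn

/-- Let `(x_k)` enumerate all the basis vectors `e_j^n` of the `ℓ¹`-sum of the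
spaces `ℓ∞ⁿ`. Then `0` is a weak cluster point of `(x_k)`: for all `g^1, …, g^m ∈ X*`, every
`ε > 0` and every `N`, there is a member `x_k` (with `k ≥ N`) of the sequence such that
`|g^i(x_k)| < ε` for all `i = 1, …, m`. -/
theorem statement9 (E : ℕ ≃ (Σ n : ℕ, Fin (n + 1)))
    (x : ℕ → LOneSumLinf) (hx : ∀ k, x k = basisVec (E k).1 (E k).2) :
    ∀ (N m : ℕ) (g : Fin m → StrongDual ℝ LOneSumLinf) (ε : ℝ), 0 < ε →
      ∃ k, N ≤ k ∧ ∀ i : Fin m, |g i (x k)| < ε := by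
  intro N m g ε hε
  set n := ⌈(∑ i, ‖g i‖) / ε⌉₊ + N
  have hlarge := card_filter_exists_le_abs_le_ceil_div (fun i j => g i (basisVec n j)) hε
    (sum_le_sum fun i _ => sum_abs_apply_basisVec_le_opNorm (g i) n)
  have hearly :=
    card_filter_lt_le_of_injective (E.symm.injective.comp (sigma_mk_injective (i := n))) N
  obtain ⟨j, -, hj⟩ := exists_mem_notMem_of_card_lt_card (t := univ) <|
    (card_union_le _ _).trans_lt <| (add_le_add hlarge hearly).trans_lt (by simp [n])
  simp only [mem_union, mem_filter, mem_univ, true_and, not_or, not_exists, not_le,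
    Function.comp_apply, not_lt] at hj
  exact ⟨E.symm ⟨n, j⟩, hj.2, fun i => by rw [hx, E.apply_symm_apply]; exact hj.1 i⟩
end

section
/- Fix α > 0 and let Y_α = (ℓ¹, α‖·‖₁) ⊕₁ (C[1,ω], ‖·‖∞). For k ∈ ℕ set x_k = (e_k, χ_{[k,ω]}) ∈ Y_α and let X_α be the closed linear span of {x_k}. Then X_α = {((η_k), f) ∈ Y_α : f(n) = ∑_{k=1}^n η_k for all n ∈ ℕ}. -/
open Filter Topology NormedSpace

/-- The space `Y = ℓ¹ ⊕ C[1,ω]`, where `C[1,ω]` is modelled as the continuous functions on the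
one-point compactification `OnePoint ℕ` of `ℕ` (the point `∞` playing the role of `ω`).
(As a topological vector space; the `⊕₁`-norm `α‖·‖₁ + ‖·‖∞` for a fixed `α > 0` induces the
product topology, so the closed linear span below does not depend on `α`.) -/
abbrev Yspace : Type := lp (fun _ : ℕ => ℝ) 1 × C(OnePoint ℕ, ℝ)

/-- The indicator function `χ_{[k,ω]}` of the final segment `[k,ω]` (0-indexed: the points
`n ≥ k` together with `∞`), as a continuous function on `OnePoint ℕ`. -/
noncomputable def chiSeg (k : ℕ) : C(OnePoint ℕ, ℝ) :=
  OnePoint.continuousMapMkNat (fun n => if k ≤ n then (1 : ℝ) else 0) 1 <| by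
    refine Tendsto.congr' ?_ tendsto_const_nhds
    filter_upwards [eventually_ge_atTop k] with n hn
    simp [hn]

/-- The sequence `x_k = (e_k, χ_{[k,ω]}) ∈ Y`. -/
noncomputable def xAlpha (k : ℕ) : Yspace := (lp.single 1 k (1 : ℝ), chiSeg k)

open OnePoint in
lemma chiSeg_apply_coe (k n : ℕ) : chiSeg k (n : OnePoint ℕ) = if k ≤ n then (1:ℝ) else 0 := rfl

open OnePoint in
lemma chiSeg_apply_infty (k : ℕ) : chiSeg k (∞ : OnePoint ℕ) = 1 := rfl

lemma continuous_eval_lp (n : ℕ) : Continuous (fun f : lp (fun _ : ℕ => ℝ) 1 => f n) := by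
  have : LipschitzWith 1 (fun f : lp (fun _ : ℕ => ℝ) 1 => f n) := by
    refine LipschitzWith.of_dist_le_mul fun f g => ?_
    rw [dist_eq_norm, dist_eq_norm]
    have := lp.norm_apply_le_norm (p := 1) one_ne_zero (f - g) n
    simpa using this
  exact this.continuous

open OnePoint in
/-- The closed linear span `X_α` of `{x_k : k ∈ ℕ}` in
`Y_α = (ℓ¹, α‖·‖₁) ⊕₁ C[1,ω]` (for any fixed `α > 0`) is exactly the set of pairs
`((η_k), f)` with `f(n) = ∑_{k=1}^n η_k` for all `n` (0-indexed:
`f(n) = ∑_{k ≤ n} η_k`). -/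
theorem statement10 (α : ℝ) (hα : 0 < α) :
    ((Submodule.span ℝ (Set.range xAlpha)).topologicalClosure : Set Yspace) =
      {p : Yspace | ∀ n : ℕ, p.2 (n : OnePoint ℕ) = ∑ k ∈ Finset.range (n + 1), p.1 k} := by
  apply Set.Subset.antisymm
  · -- forward inclusion
    rw [Submodule.topologicalClosure_coe]
    have hclosed : IsClosed {p : Yspace |
        ∀ n : ℕ, p.2 (n : OnePoint ℕ) = ∑ k ∈ Finset.range (n + 1), p.1 k} := by
      have : {p : Yspace | ∀ n : ℕ, p.2 (n : OnePoint ℕ) = ∑ k ∈ Finset.range (n + 1), p.1 k}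
          = ⋂ n : ℕ, {p : Yspace | p.2 (n : OnePoint ℕ) = ∑ k ∈ Finset.range (n + 1), p.1 k} := by
        ext p; simp [Set.mem_iInter]
      rw [this]
      refine isClosed_iInter fun n => isClosed_eq ?_ ?_
      · exact (continuous_eval_const ((n : OnePoint ℕ))).comp continuous_snd
      · exact continuous_finset_sum _ fun k _ => (continuous_eval_lp k).comp continuous_fst
    refine closure_minimal ?_ hclosed
    intro p hp
    induction hp using Submodule.span_induction with
    | mem x hx =>
      obtain ⟨k, rfl⟩ := hx
      intro n
      simp only [xAlpha, chiSeg_apply_coe, lp.single_apply, eq_rec_constant]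
      simp [Finset.sum_dite_eq', Nat.lt_succ_iff]
    | zero => intro n; simp
    | add x y _ _ hx hy =>
      intro n
      simp only [Prod.snd_add, Prod.fst_add, ContinuousMap.add_apply, lp.coeFn_add, Pi.add_apply]
      rw [hx n, hy n, Finset.sum_add_distrib]
    | smul c x _ hx =>
      intro n
      simp only [Prod.smul_snd, Prod.smul_fst, ContinuousMap.smul_apply, lp.coeFn_smul,
        Pi.smul_apply, smul_eq_mul]
      rw [hx n, Finset.mul_sum]
  · -- reverse inclusion
    rintro ⟨η, f⟩ hp
    simp only [Set.mem_setOf_eq] at hp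
    rw [Submodule.topologicalClosure_coe]
    set u : ℕ → Yspace := fun N => ∑ k ∈ Finset.range N, η k • xAlpha k with hu
    have humem : ∀ N, u N ∈ (Submodule.span ℝ (Set.range xAlpha) : Submodule ℝ Yspace) :=
      fun N => Submodule.sum_mem _ fun k _ =>
        Submodule.smul_mem _ _ (Submodule.subset_span (Set.mem_range_self k))
    -- summability
    have hsummable : Summable fun k => ‖η k‖ := by
      have := (lp.memℓp η).summable (p := 1) (by norm_num)
      simpa using this
    set S : ℝ := ∑' k, ‖η k‖ with hS
    set s : ℕ → ℝ := fun N => ∑ k ∈ Finset.range N, ‖η k‖ with hs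
    have hsle : ∀ N, s N ≤ S := fun N =>
      Summable.sum_le_tsum _ (fun _ _ => norm_nonneg _) hsummable
    have hstend : Tendsto s atTop (𝓝 S) := hsummable.hasSum.tendsto_sum_nat
    -- components of u
    have hu1 : ∀ N, (u N).1 = ∑ k ∈ Finset.range N, lp.single 1 k (η k) := by
      intro N
      rw [hu, Prod.fst_sum]
      refine Finset.sum_congr rfl fun k _ => ?_
      simp [xAlpha, ← lp.single_smul]
    have hu2 : ∀ N, (u N).2 = ∑ k ∈ Finset.range N, η k • chiSeg k := by
      intro N; rw [hu, Prod.snd_sum]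
      exact Finset.sum_congr rfl fun k _ => by simp [xAlpha]
    -- first component converges
    have h1 : Tendsto (fun N => (u N).1) atTop (𝓝 η) := by
      simp only [hu1]
      exact (lp.hasSum_single (by norm_num) η).tendsto_sum_nat
    -- key identity: tails
    have htail : ∀ N n : ℕ, N ≤ n + 1 →
        f (n : OnePoint ℕ) - ∑ k ∈ Finset.range N, η k = ∑ k ∈ Finset.Ico N (n+1), η k := by
      intro N n h
      rw [hp n, Finset.sum_Ico_eq_sub _ h]
    -- bound
    have hbound : ∀ N n : ℕ, ‖∑ k ∈ Finset.Ico N (n+1), η k‖ ≤ S - s N := by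
      intro N n
      by_cases h : N ≤ n + 1
      · calc ‖∑ k ∈ Finset.Ico N (n+1), η k‖ ≤ ∑ k ∈ Finset.Ico N (n+1), ‖η k‖ :=
              norm_sum_le _ _
          _ = s (n+1) - s N := (Finset.sum_Ico_eq_sub _ h)
          _ ≤ S - s N := by linarith [hsle (n+1)]
      · rw [Finset.Ico_eq_empty (by omega)]
        simp only [Finset.sum_empty, norm_zero]
        linarith [hsle N]
    have hftend : Tendsto (fun n : ℕ => f ((n : ℕ) : OnePoint ℕ)) atTop (𝓝 (f ∞)) :=
      (OnePoint.continuous_iff_from_nat _).mp (map_continuous f)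
    -- evaluation of the partial sums
    have heval : ∀ N n : ℕ, (∑ k ∈ Finset.range N, η k • chiSeg k) ((n : ℕ) : OnePoint ℕ)
        = ∑ k ∈ Finset.range (min N (n+1)), η k := by
      intro N n
      rw [ContinuousMap.coe_sum, Finset.sum_apply]
      simp only [ContinuousMap.smul_apply, chiSeg_apply_coe, smul_eq_mul, mul_ite, mul_one,
        mul_zero]
      rw [← Finset.sum_filter]
      congr 1
      ext k
      simp only [Finset.mem_filter, Finset.mem_range]
      omega
    have hevalinf : ∀ N, (∑ k ∈ Finset.range N, η k • chiSeg k) (∞ : OnePoint ℕ)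
        = ∑ k ∈ Finset.range N, η k := by
      intro N
      rw [ContinuousMap.coe_sum, Finset.sum_apply]
      simp [chiSeg_apply_infty]
    have h2norm : ∀ N, ‖(∑ k ∈ Finset.range N, η k • chiSeg k) - f‖ ≤ S - s N := by
      intro N
      have hnonneg : (0:ℝ) ≤ S - s N := by linarith [hsle N]
      rw [ContinuousMap.norm_le _ hnonneg]
      intro x
      induction x using OnePoint.rec with
      | infty =>
        rw [ContinuousMap.sub_apply, hevalinf N]
        have hlim : Tendsto (fun n : ℕ => ‖(∑ k ∈ Finset.range N, η k) - f ((n:ℕ) : OnePoint ℕ)‖)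
            atTop (𝓝 ‖(∑ k ∈ Finset.range N, η k) - f ∞‖) :=
          (tendsto_const_nhds.sub hftend).norm
        refine le_of_tendsto hlim ?_
        filter_upwards [eventually_ge_atTop N] with n hn
        have h' : N ≤ n + 1 := by omega
        rw [show (∑ k ∈ Finset.range N, η k) - f ((n:ℕ) : OnePoint ℕ)
            = -(∑ k ∈ Finset.Ico N (n+1), η k) by
          rw [← htail N n h']; ring]
        rw [norm_neg]
        exact hbound N n
      | coe n =>
        rw [ContinuousMap.sub_apply, heval N n]
        by_cases h : N ≤ n + 1
        · rw [min_eq_left h]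
          rw [show (∑ k ∈ Finset.range N, η k) - f ((n:ℕ) : OnePoint ℕ)
              = -(∑ k ∈ Finset.Ico N (n+1), η k) by
            rw [← htail N n h]; ring]
          rw [norm_neg]
          exact hbound N n
        · rw [min_eq_right (by omega), hp n]
          simp only [sub_self, norm_zero]
          exact hnonneg
    have h2 : Tendsto (fun N => (u N).2) atTop (𝓝 f) := by
      simp only [hu2]
      rw [tendsto_iff_norm_sub_tendsto_zero]
      refine squeeze_zero (fun N => norm_nonneg _) (fun N => h2norm N) ?_
      have : Tendsto (fun N => S - s N) atTop (𝓝 (S - S)) := tendsto_const_nhds.sub hstend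
      simpa using this
    have htend : Tendsto u atTop (𝓝 (η, f)) := by
      rw [nhds_prod_eq]
      exact (h1.prodMk h2)
    exact mem_closure_of_tendsto htend (Eventually.of_forall humem)
end

section
/- For any bounded sequence (x_k) in a Banach space X, the diameter δ_X(x_k) of the set of weak* cluster points of (x_k) in X** equals sup_{x*∈B_{X*}} (limsup_k x*(x_k) − liminf_k x*(x_k)), and also equals sup_{x*∈B_{X*}} lim_{n→∞} sup{|x*(x_l) − x*(x_j)| : l, j ≥ n}. -/
open Filter Topology NormedSpace

theorem IsCompact.exists_mapClusterPt_of_mapClusterPt_comp {ι X Y : Type*} [TopologicalSpace X]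
    [TopologicalSpace Y] [T2Space Y] {K : Set X} (hK : IsCompact K) {g : X → Y}
    (hg : Continuous g) {l : Filter ι} {u : ι → X} (hu : ∀ᶠ i in l, u i ∈ K) {y : Y}
    (hy : MapClusterPt y l (g ∘ u)) : ∃ a ∈ K, MapClusterPt a l u ∧ g a = y := by
  -- keep only the indices at which `g ∘ u` is close to `y`
  set F := l ⊓ comap (g ∘ u) (𝓝 y)
  have hmap : map (g ∘ u) F = map (g ∘ u) l ⊓ 𝓝 y := Filter.push_pull _ _ _
  have : F.NeBot := by
    rw [← map_neBot_iff (g ∘ u), hmap, inf_comm]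
    exact hy
  obtain ⟨a, haK, ha⟩ :=
    hK.exists_mapClusterPt_of_frequently (hu.filter_mono (inf_le_left : F ≤ l)).frequently
  refine ⟨a, haK, ha.mono inf_le_left, ?_⟩
  have hga : ClusterPt (g a) (map (g ∘ u) F) := ha.continuousAt_comp hg.continuousAt
  exact eq_of_nhds_neBot (hga.mono (hmap ▸ inf_le_right))

section RealSequences

variable {u : ℕ → ℝ} {C : ℝ}

theorem isBoundedUnder_le_and_ge_of_abs_le (h : ∀ k, |u k| ≤ C) :
    IsBoundedUnder (· ≤ ·) atTop u ∧ IsBoundedUnder (· ≥ ·) atTop u :=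
  isBoundedUnder_le_abs.1 (isBoundedUnder_of ⟨C, h⟩)

theorem limsup_sub_liminf_le_sSup_abs_sub (h : ∀ k, |u k| ≤ C) (n : ℕ) :
    limsup u atTop - liminf u atTop ≤
      sSup {c : ℝ | ∃ l j : ℕ, n ≤ l ∧ n ≤ j ∧ c = |u l - u j|} := by
  obtain ⟨hab, hbe⟩ := isBoundedUnder_le_and_ge_of_abs_le h
  set s := sSup {c : ℝ | ∃ l j : ℕ, n ≤ l ∧ n ≤ j ∧ c = |u l - u j|}
  have hdiff : ∀ l j, n ≤ l → n ≤ j → u l ≤ u j + s := fun l j hl hj => by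
    have : |u l - u j| ≤ s := by
      refine le_csSup ⟨2 * C, ?_⟩ ⟨l, j, hl, hj, rfl⟩
      rintro _ ⟨l, j, -, -, rfl⟩
      linarith [abs_sub (u l) (u j), h l, h j]
    linarith [le_abs_self (u l - u j)]
  have hsup : ∀ j, n ≤ j → limsup u atTop ≤ u j + s := fun j hj =>
    limsup_le_of_le hbe.isCoboundedUnder_le
      ((eventually_ge_atTop n).mono fun l hl => hdiff l j hl hj)
  have hinf : limsup u atTop - s ≤ liminf u atTop :=
    le_liminf_of_le hab.isCoboundedUnder_ge
      ((eventually_ge_atTop n).mono fun j hj => by linarith [hsup j hj])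
  linarith

theorem iInf_sSup_abs_sub_eq_limsup_sub_liminf (h : ∀ k, |u k| ≤ C) :
    ⨅ n : ℕ, sSup {c : ℝ | ∃ l j : ℕ, n ≤ l ∧ n ≤ j ∧ c = |u l - u j|} =
      limsup u atTop - liminf u atTop := by
  obtain ⟨hab, hbe⟩ := isBoundedUnder_le_and_ge_of_abs_le h
  refine le_antisymm (le_of_forall_pos_le_add fun ε hε => ?_)
    (le_ciInf (limsup_sub_liminf_le_sSup_abs_sub h))
  have hup : ∀ᶠ k in atTop, u k < limsup u atTop + ε / 2 :=
    eventually_lt_of_limsup_lt (by linarith) hab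
  have hlow : ∀ᶠ k in atTop, liminf u atTop - ε / 2 < u k :=
    eventually_lt_of_lt_liminf (by linarith) hbe
  obtain ⟨n, hn⟩ := (hup.and hlow).exists_forall_of_atTop
  refine (ciInf_le ⟨limsup u atTop - liminf u atTop, ?_⟩ n).trans
    (csSup_le ⟨0, n, n, le_rfl, le_rfl, by simp⟩ ?_)
  · rintro _ ⟨m, rfl⟩
    exact limsup_sub_liminf_le_sSup_abs_sub h m
  · rintro _ ⟨l, j, hl, hj, rfl⟩
    rw [abs_sub_le_iff]
    constructor <;> linarith [hn l hl, hn j hj]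

end RealSequences

section WeakStarClusterPoints

variable {X : Type*} [NormedAddCommGroup X] [NormedSpace ℝ X] {x : ℕ → X} {M : ℝ}

theorem abs_apply_le_of_norm_le (hM : ∀ k, ‖x k‖ ≤ M) (f : StrongDual ℝ X) (k : ℕ) :
    |f (x k)| ≤ ‖f‖ * M :=
  (f.le_opNorm (x k)).trans (mul_le_mul_of_nonneg_left (hM k) (norm_nonneg f))

theorem inclusionInDoubleDual_mem_closedBall (hM : ∀ k, ‖x k‖ ≤ M) (k : ℕ) :
    inclusionInDoubleDual ℝ X (x k) ∈ Metric.closedBall 0 M :=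
  Metric.mem_closedBall.2 <| (dist_zero_right (inclusionInDoubleDual ℝ X (x k))).trans_le
    ((double_dual_bound ℝ X (x k)).trans (hM k))

theorem mapClusterPt_apply_of_mem_weakStarClusterPoints {y : StrongDual ℝ (StrongDual ℝ X)}
    (hy : y ∈ weakStarClusterPoints x) (f : StrongDual ℝ X) :
    MapClusterPt (y f) atTop fun k => f (x k) :=
  hy.continuousAt_comp (WeakBilin.eval_continuous _ f).continuousAt

theorem weakStarClusterPoints_subset_closedBall (hM : ∀ k, ‖x k‖ ≤ M) :
    weakStarClusterPoints x ⊆ Metric.closedBall 0 M := fun _ hy =>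
  (WeakDual.isClosed_closedBall 0 M).mem_of_mapClusterPt hy <|
    Eventually.of_forall <| inclusionInDoubleDual_mem_closedBall hM

theorem exists_mem_weakStarClusterPoints_apply_eq (hM : ∀ k, ‖x k‖ ≤ M)
    (f : StrongDual ℝ X) {L : ℝ} (hL : MapClusterPt L atTop fun k => f (x k)) :
    ∃ y ∈ weakStarClusterPoints x, y f = L := by
  obtain ⟨y, -, hy, hyf⟩ :=
    (WeakDual.isCompact_closedBall (𝕜 := ℝ) 0 M).exists_mapClusterPt_of_mapClusterPt_comp
      (WeakBilin.eval_continuous _ f)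
      (Eventually.of_forall <| inclusionInDoubleDual_mem_closedBall hM) hL
  exact ⟨WeakDual.toStrongDual y, hy, hyf⟩

theorem abs_sub_apply_le_limsup_sub_liminf (hM : ∀ k, ‖x k‖ ≤ M)
    {y z : StrongDual ℝ (StrongDual ℝ X)} (hy : y ∈ weakStarClusterPoints x)
    (hz : z ∈ weakStarClusterPoints x) (f : StrongDual ℝ X) :
    |(y - z) f| ≤ limsup (fun k => f (x k)) atTop - liminf (fun k => f (x k)) atTop := by
  obtain ⟨hab, hbe⟩ := isBoundedUnder_le_and_ge_of_abs_le (abs_apply_le_of_norm_le hM f)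
  have hy' := mapClusterPt_apply_of_mem_weakStarClusterPoints hy f
  have hz' := mapClusterPt_apply_of_mem_weakStarClusterPoints hz f
  rw [sub_apply, abs_sub_le_iff]
  constructor <;>
    linarith [hy'.le_limsup hab, hy'.liminf_le hbe, hz'.le_limsup hab, hz'.liminf_le hbe]

theorem exists_sub_apply_eq_limsup_sub_liminf (hM : ∀ k, ‖x k‖ ≤ M) (f : StrongDual ℝ X) :
    ∃ y ∈ weakStarClusterPoints x, ∃ z ∈ weakStarClusterPoints x,
      (y - z) f = limsup (fun k => f (x k)) atTop - liminf (fun k => f (x k)) atTop := by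
  obtain ⟨hab, hbe⟩ := isBoundedUnder_le_and_ge_of_abs_le (abs_apply_le_of_norm_le hM f)
  obtain ⟨y, hy, hyf⟩ := exists_mem_weakStarClusterPoints_apply_eq hM f
    (MapClusterPt.limsup hbe.isCoboundedUnder_le hab)
  obtain ⟨z, hz, hzf⟩ := exists_mem_weakStarClusterPoints_apply_eq hM f
    (MapClusterPt.liminf hab.isCoboundedUnder_ge hbe)
  exact ⟨y, hy, z, hz, by rw [sub_apply, hyf, hzf]⟩

theorem diam_weakStarClusterPoints_eq_sSup (hM : ∀ k, ‖x k‖ ≤ M) :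
    Metric.diam (weakStarClusterPoints x) =
      sSup {d : ℝ | ∃ f : StrongDual ℝ X, ‖f‖ ≤ 1 ∧
        d = limsup (fun k => f (x k)) atTop - liminf (fun k => f (x k)) atTop} := by
  set D := {d : ℝ | ∃ f : StrongDual ℝ X, ‖f‖ ≤ 1 ∧
    d = limsup (fun k => f (x k)) atTop - liminf (fun k => f (x k)) atTop}
  have hbdd : Bornology.IsBounded (weakStarClusterPoints x) :=
    Metric.isBounded_closedBall.subset (weakStarClusterPoints_subset_closedBall hM)
  have hle_diam : ∀ d ∈ D, d ≤ Metric.diam (weakStarClusterPoints x) := by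
    rintro _ ⟨f, hf, rfl⟩
    obtain ⟨y, hy, z, hz, hyz⟩ := exists_sub_apply_eq_limsup_sub_liminf hM f
    calc _ = (y - z) f := hyz.symm
      _ ≤ ‖y - z‖ * ‖f‖ := (le_abs_self _).trans ((y - z).le_opNorm f)
      _ ≤ ‖y - z‖ := mul_le_of_le_one_right (y - z).opNorm_nonneg hf
      _ = dist y z := (dist_eq_norm y z).symm
      _ ≤ _ := Metric.dist_le_diam_of_mem hbdd hy hz
  have hzero : (0 : ℝ) ∈ D := ⟨0, by simp, by simp⟩
  have hnonneg : 0 ≤ sSup D := le_csSup ⟨_, hle_diam⟩ hzero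
  refine le_antisymm (Metric.diam_le_of_forall_dist_le hnonneg fun y hy z hz => ?_)
    (csSup_le ⟨0, hzero⟩ hle_diam)
  rw [dist_eq_norm y z]
  exact ContinuousLinearMap.opNorm_le_of_unit_norm hnonneg fun f hf =>
    (abs_sub_apply_le_limsup_sub_liminf hM hy hz f).trans
      (le_csSup ⟨_, hle_diam⟩ ⟨f, hf.le, rfl⟩)

end WeakStarClusterPoints

theorem statement18_general {X : Type*} [NormedAddCommGroup X] [NormedSpace ℝ X]
    (x : ℕ → X) (hb : ∃ M : ℝ, ∀ k, ‖x k‖ ≤ M) :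
    Metric.diam (weakStarClusterPoints x) =
      sSup {d : ℝ | ∃ f : StrongDual ℝ X, ‖f‖ ≤ 1 ∧
        d = Filter.limsup (fun k => f (x k)) atTop - Filter.liminf (fun k => f (x k)) atTop} ∧
    Metric.diam (weakStarClusterPoints x) =
      sSup {d : ℝ | ∃ f : StrongDual ℝ X, ‖f‖ ≤ 1 ∧
        d = ⨅ n : ℕ, sSup {c : ℝ | ∃ l j : ℕ, n ≤ l ∧ n ≤ j ∧ c = |f (x l) - f (x j)|}} := by
  obtain ⟨M, hM⟩ := hb
  refine ⟨diam_weakStarClusterPoints_eq_sSup hM, ?_⟩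
  rw [diam_weakStarClusterPoints_eq_sSup hM]
  congr 1
  ext d
  refine exists_congr fun f => and_congr_right fun _ => ?_
  rw [iInf_sSup_abs_sub_eq_limsup_sub_liminf (abs_apply_le_of_norm_le hM f)]

/-- For any bounded sequence `(x_k)` in a Banach space `X`, the diameter
`δ_X(x_k)` of the weak* cluster set of `(x_k)` in `X**` equals
`sup_{x* ∈ B_{X*}} (limsup_k x*(x_k) − liminf_k x*(x_k))`, and also equals
`sup_{x* ∈ B_{X*}} lim_n sup {|x*(x_l) − x*(x_j)| : l, j ≥ n}` (the limit of this nonincreasing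
sequence of suprema being its infimum over `n`). -/
theorem statement18 {X : Type*} [NormedAddCommGroup X] [NormedSpace ℝ X] [CompleteSpace X]
    (x : ℕ → X) (hb : ∃ M : ℝ, ∀ k, ‖x k‖ ≤ M) :
    Metric.diam (weakStarClusterPoints x) =
      sSup {d : ℝ | ∃ f : StrongDual ℝ X, ‖f‖ ≤ 1 ∧
        d = Filter.limsup (fun k => f (x k)) atTop - Filter.liminf (fun k => f (x k)) atTop} ∧
    Metric.diam (weakStarClusterPoints x) =
      sSup {d : ℝ | ∃ f : StrongDual ℝ X, ‖f‖ ≤ 1 ∧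
        d = ⨅ n : ℕ, sSup {c : ℝ | ∃ l j : ℕ, n ≤ l ∧ n ≤ j ∧ c = |f (x l) - f (x j)|}} :=
  statement18_general x hb
end

section
/- Let X be an L-embedded Banach space with L-projection P : X** → X, let x** be a weak* cluster point of a bounded sequence (x_k) in X, set x = Px** and x_s = x** − x. Then for every ε ∈ (0, ‖x_s‖) there is a subsequence (x_{k_n}) such that ‖∑_{i=1}^n α_i (x_{k_i} − x)‖ ≥ (‖x_s‖ − ε) ∑_{i=1}^n |α_i| for all n and all real α_1,…,α_n. -/
/-!
Because `P` is an L-projection fixing `X` and killing `x_s = y - P y`, the singular part is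
L-orthogonal to `X`: `‖ι u + β x_s‖ = ‖u‖ + |β| ‖x_s‖`. The bidual norm is weak* lower
semicontinuous and `x_s` is a weak* cluster point of `ι (x k - v)`, so by compactness of the
unit sphere of `F × ℝ` for a finite-dimensional `F ⊆ X`, infinitely many `x k - v` are
L-orthogonal to `F` up to an arbitrarily small error. Choosing the terms one at a time, with `F`
the span of the terms already chosen and errors `ε / 2 ^ (n + 1)`, gives the subsequence.
-/

open Filter Topology NormedSpace

-- Instance search does not unify `NormedSpace.toNormSMulClass` with the operator-norm
-- instances on the bidual.
instance {X : Type*} [NormedAddCommGroup X] [NormedSpace ℝ X] :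
    NormSMulClass ℝ (StrongDual ℝ (StrongDual ℝ X)) :=
  ⟨fun β z => @norm_smul ℝ (StrongDual ℝ (StrongDual ℝ X)) _ _ _ NormedSpace.toNormSMulClass β z⟩

theorem exists_seq_forall_prefix {α : Type*} (Q : ∀ n, (Fin n → α) → Prop)
    (h0 : Q 0 Fin.elim0) (step : ∀ n f, Q n f → ∃ a, Q (n + 1) (Fin.snoc f a)) :
    ∃ φ : ℕ → α, ∀ n, Q n fun i => φ i := by
  choose next hnext using step
  let s : ∀ n, {f : Fin n → α // Q n f} := fun n =>
    Nat.rec ⟨Fin.elim0, h0⟩ (fun n f => ⟨Fin.snoc f.1 (next n f.1 f.2), hnext n f.1 f.2⟩) n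
  have hs : ∀ n (i : Fin n), (s n).1 i = (s (i + 1)).1 (Fin.last i) := by
    intro n
    induction n with
    | zero => exact fun i => i.elim0
    | succ n ih =>
      refine Fin.lastCases rfl fun i => ?_
      simp only [s, Fin.snoc_castSucc, Fin.val_castSucc]
      exact ih i
  exact ⟨fun n => (s (n + 1)).1 (Fin.last n), fun n => by simpa only [← hs] using (s n).2⟩

theorem Fin.strictMono_snoc {β : Type*} [Preorder β] {n : ℕ} {f : Fin n → β} (hf : StrictMono f)
    {b : β} (hb : ∀ i, f i < b) : StrictMono (Fin.snoc f b : Fin (n + 1) → β) := by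
  intro i j hij
  cases j using Fin.lastCases with
  | last =>
    cases i using Fin.lastCases with
    | last => exact absurd hij (lt_irrefl _)
    | cast i => simpa using hb i
  | cast j =>
    cases i using Fin.lastCases with
    | last => exact absurd hij (not_lt.2 (Fin.le_last _))
    | cast i => simpa using hf (Fin.castSucc_lt_castSucc_iff.1 hij)

theorem IsCompact.eventually_forall_lt_of_lowerSemicontinuous {Z P : Type*} [TopologicalSpace Z]
    [TopologicalSpace P] {K : Set P} (hK : IsCompact K) {g : P → ℝ} (hg : Continuous g)
    {Φ : Z × P → ℝ} (hΦ : LowerSemicontinuous Φ) {z₀ : Z} (h : ∀ p ∈ K, g p < Φ (z₀, p)) :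
    ∀ᶠ z in 𝓝 z₀, ∀ p ∈ K, g p < Φ (z, p) := by
  refine hK.eventually_forall_of_forall_eventually fun p hp => ?_
  obtain ⟨t, hgt, htΦ⟩ := exists_between (h p hp)
  filter_upwards [hΦ (z₀, p) t htΦ,
    ((hg.comp continuous_snd).tendsto (z₀, p)).eventually (eventually_lt_nhds hgt)] with q h₁ h₂
  exact h₂.trans h₁

theorem WeakDual.lowerSemicontinuous_norm {𝕜 E : Type*} [NontriviallyNormedField 𝕜]
    [SeminormedAddCommGroup E] [NormedSpace 𝕜 E] :
    LowerSemicontinuous fun z : WeakDual 𝕜 E => ‖toStrongDual z‖ :=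
  lowerSemicontinuous_iff_isClosed_preimage.2 fun t => by
    simpa [Set.preimage, mem_closedBall_zero_iff] using
      WeakDual.isClosed_closedBall (0 : StrongDual 𝕜 E) t

theorem isCompact_setOf_norm_add_abs_eq_one {E : Type*} [SeminormedAddCommGroup E]
    [ProperSpace E] : IsCompact {p : E × ℝ | ‖p.1‖ + |p.2| = 1} := by
  refine Metric.isCompact_of_isClosed_isBounded
    (isClosed_eq (by fun_prop) continuous_const) ?_
  refine (Metric.isBounded_closedBall (x := 0) (r := 1)).subset fun p hp => ?_
  have hp : ‖p.1‖ + ‖p.2‖ = 1 := hp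
  rw [mem_closedBall_zero_iff, Prod.norm_def, max_le_iff]
  constructor <;> linarith [norm_nonneg p.1, norm_nonneg p.2]

theorem norm_inclusionInDoubleDual_add_smul_sub_proj {X : Type*} [NormedAddCommGroup X]
    [NormedSpace ℝ X]
    {P : StrongDual ℝ (StrongDual ℝ X) →ₗ[ℝ] StrongDual ℝ (StrongDual ℝ X)}
    (hProj : ∀ y, P (P y) = P y)
    (hRange : Set.range P = Set.range (fun v : X => inclusionInDoubleDual ℝ X v))
    (hL : ∀ y, ‖y‖ = ‖P y‖ + ‖y - P y‖) (y : StrongDual ℝ (StrongDual ℝ X)) (u : X) (β : ℝ) :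
    ‖inclusionInDoubleDual ℝ X u + β • (y - P y)‖ = ‖u‖ + |β| * ‖y - P y‖ := by
  obtain ⟨z, hz⟩ : inclusionInDoubleDual ℝ X u ∈ Set.range P := hRange ▸ ⟨u, rfl⟩
  have hP : P (inclusionInDoubleDual ℝ X u + β • (y - P y)) = inclusionInDoubleDual ℝ X u := by
    rw [map_add, map_smul, map_sub P y (P y), hProj, sub_self, smul_zero, add_zero, ← hz, hProj]
  have hι : ‖inclusionInDoubleDual ℝ X u‖ = ‖u‖ := (inclusionInDoubleDualLi ℝ).norm_map u
  rw [hL, hP, add_sub_cancel_left (G := StrongDual ℝ (StrongDual ℝ X)), norm_smul,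
    Real.norm_eq_abs, hι]

section LOrthogonal

variable {X : Type*} [NormedAddCommGroup X] [NormedSpace ℝ X] {xs : StrongDual ℝ (StrongDual ℝ X)}
  {r : ℝ}

theorem eventually_forall_norm_add_smul_ge
    (hL : ∀ (u : X) (β : ℝ), ‖u‖ + |β| * r ≤ ‖inclusionInDoubleDual ℝ X u + β • xs‖)
    (F : Submodule ℝ X) [FiniteDimensional ℝ F] {η : ℝ} (hη : 0 < η) :
    ∀ᶠ z in 𝓝 (StrongDual.toWeakDual xs), ∀ u ∈ F, ∀ β : ℝ,
      ‖u‖ + |β| * r - η * (‖u‖ + |β|) ≤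
        ‖inclusionInDoubleDual ℝ X u + β • WeakDual.toStrongDual z‖ := by
  set K : Set (F × ℝ) := {p | ‖p.1‖ + |p.2| = 1}
  have hK : IsCompact K := isCompact_setOf_norm_add_abs_eq_one
  have hΦ : LowerSemicontinuous fun q : WeakDual ℝ (StrongDual ℝ X) × (F × ℝ) =>
      ‖inclusionInDoubleDual ℝ X q.2.1 + q.2.2 • WeakDual.toStrongDual q.1‖ :=
    WeakDual.lowerSemicontinuous_norm.comp (g := fun q : WeakDual ℝ (StrongDual ℝ X) × (F × ℝ) =>
      StrongDual.toWeakDual (inclusionInDoubleDual ℝ X q.2.1) + q.2.2 • q.1) (by fun_prop)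
  have hev := hK.eventually_forall_lt_of_lowerSemicontinuous
    (g := fun p => ‖p.1‖ + |p.2| * r - η) (by fun_prop) hΦ (z₀ := StrongDual.toWeakDual xs)
    fun p _ => by simpa using (hL p.1 p.2).trans_lt' (sub_lt_self _ hη)
  filter_upwards [hev] with z hz u hu β
  set s := ‖u‖ + |β|
  rcases (show 0 ≤ s by positivity).eq_or_lt with hs | hs
  · have hu0 : ‖u‖ = 0 := by linarith [norm_nonneg u, abs_nonneg β]
    have hβ0 : |β| = 0 := by linarith [norm_nonneg u, abs_nonneg β]
    rw [hu0, hβ0, ← hs]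
    simp only [zero_add, zero_mul, mul_zero, sub_zero]
    positivity
  have hpK : (s⁻¹ • (⟨u, hu⟩ : F), s⁻¹ * β) ∈ K := by
    change ‖s⁻¹ • u‖ + |s⁻¹ * β| = 1
    rw [norm_smul, abs_mul, Real.norm_eq_abs, abs_inv, abs_of_pos hs, ← mul_add,
      inv_mul_cancel₀ hs.ne']
  have h := hz _ hpK
  change ‖s⁻¹ • u‖ + |s⁻¹ * β| * r - η <
    ‖inclusionInDoubleDual ℝ X (s⁻¹ • u) + (s⁻¹ * β) • WeakDual.toStrongDual z‖ at h
  rw [map_smul, mul_smul, ← smul_add, norm_smul, norm_smul, abs_mul, Real.norm_eq_abs, abs_inv,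
    abs_of_pos hs] at h
  have := mul_lt_mul_of_pos_left h hs
  simp only [mul_sub, mul_add, ← mul_assoc, mul_inv_cancel₀ hs.ne', one_mul] at this
  linarith

theorem frequently_forall_le_norm_add_smul
    (hL : ∀ (u : X) (β : ℝ), ‖u‖ + |β| * r ≤ ‖inclusionInDoubleDual ℝ X u + β • xs‖)
    {w : ℕ → X}
    (hw : MapClusterPt (StrongDual.toWeakDual xs) atTop
      fun m => StrongDual.toWeakDual (inclusionInDoubleDual ℝ X (w m)))
    {n : ℕ} (u : Fin n → X) {c : ℝ} (hcr : c ≤ r)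
    (hc : ∀ a : Fin n → ℝ, c * ∑ i, |a i| ≤ ‖∑ i, a i • u i‖) {η : ℝ} (hη : 0 < η) :
    ∃ᶠ m in atTop, ∀ (a : Fin n → ℝ) (β : ℝ),
      (c - η) * (∑ i, |a i| + |β|) ≤ ‖∑ i, a i • u i + β • w m‖ := by
  set F := Submodule.span ℝ (Set.range u)
  have : FiniteDimensional ℝ F := FiniteDimensional.span_of_finite ℝ (Set.finite_range u)
  set B := ∑ i, ‖u i‖
  have hB : 0 ≤ B := by positivity
  have hη' : 0 < η / (B + 1) := by positivity
  refine (mapClusterPt_iff_frequently.1 hw _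
    (eventually_forall_norm_add_smul_ge hL F hη')).mono fun m hm a β => ?_
  set S := ∑ i, |a i|
  have hvF : ∑ i, a i • u i ∈ F :=
    Submodule.sum_mem _ fun i _ => Submodule.smul_mem _ _ (Submodule.subset_span ⟨i, rfl⟩)
  have hnear : ‖∑ i, a i • u i‖ + |β| * r - η / (B + 1) * (‖∑ i, a i • u i‖ + |β|) ≤
      ‖∑ i, a i • u i + β • w m‖ := by
    rw [← (inclusionInDoubleDualLi ℝ).norm_map (∑ i, a i • u i + β • w m), map_add, map_smul]
    exact hm _ hvF β
  have hupper : ‖∑ i, a i • u i‖ ≤ B * S := by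
    calc ‖∑ i, a i • u i‖ ≤ ∑ i, |a i| * ‖u i‖ := by
          simp only [← Real.norm_eq_abs, ← norm_smul]; exact norm_sum_le _ _
      _ ≤ ∑ i, |a i| * B := by
          gcongr with i
          exact Finset.single_le_sum (fun j _ => norm_nonneg (u j)) (Finset.mem_univ i)
      _ = B * S := by rw [← Finset.sum_mul, mul_comm]
  have hslack : η / (B + 1) * (‖∑ i, a i • u i‖ + |β|) ≤ η * (S + |β|) := by
    calc η / (B + 1) * (‖∑ i, a i • u i‖ + |β|) ≤ η / (B + 1) * ((B + 1) * (S + |β|)) := by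
          gcongr
          have hS : 0 ≤ S := by positivity
          nlinarith [mul_nonneg hB (abs_nonneg β)]
      _ = η * (S + |β|) := by field_simp
  have hβr : |β| * c ≤ |β| * r := mul_le_mul_of_nonneg_left hcr (abs_nonneg β)
  linarith [hc a]

theorem exists_strictMono_le_norm_sum_smul
    (hL : ∀ (u : X) (β : ℝ), ‖u‖ + |β| * r ≤ ‖inclusionInDoubleDual ℝ X u + β • xs‖)
    {w : ℕ → X}
    (hw : MapClusterPt (StrongDual.toWeakDual xs) atTop
      fun m => StrongDual.toWeakDual (inclusionInDoubleDual ℝ X (w m)))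
    {ε : ℝ} (hε : 0 < ε) :
    ∃ φ : ℕ → ℕ, StrictMono φ ∧ ∀ (n : ℕ) (α : ℕ → ℝ),
      (r - ε) * ∑ i ∈ Finset.range n, |α i| ≤ ‖∑ i ∈ Finset.range n, α i • w (φ i)‖ := by
  let Q : ∀ n, (Fin n → ℕ) → Prop := fun n f => StrictMono f ∧
    ∀ a : Fin n → ℝ, (r - ε + ε / 2 ^ n) * ∑ i, |a i| ≤ ‖∑ i, a i • w (f i)‖
  have hstep : ∀ n f, Q n f → ∃ m, Q (n + 1) (Fin.snoc f m) := by
    intro n f ⟨hf, hbound⟩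
    have hcr : r - ε + ε / 2 ^ n ≤ r := by
      linarith [div_le_self hε.le (one_le_pow₀ one_le_two : (1 : ℝ) ≤ 2 ^ n)]
    obtain ⟨m, hm, hfm⟩ := ((frequently_forall_le_norm_add_smul hL hw (w ∘ f) hcr hbound
      (η := ε / 2 ^ (n + 1)) (by positivity)).and_eventually
      (eventually_all.2 fun i => eventually_gt_atTop (f i))).exists
    refine ⟨m, Fin.strictMono_snoc hf hfm, fun a => ?_⟩
    have hc : r - ε + ε / 2 ^ (n + 1) = r - ε + ε / 2 ^ n - ε / 2 ^ (n + 1) := by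
      rw [pow_succ]; ring
    rw [Fin.sum_univ_castSucc, Fin.sum_univ_castSucc, hc]
    simpa only [Fin.snoc_castSucc, Fin.snoc_last, Function.comp] using
      hm (fun i => a i.castSucc) (a (Fin.last n))
  obtain ⟨φ, hφ⟩ := exists_seq_forall_prefix Q ⟨fun i => i.elim0, fun a => by simp⟩ hstep
  refine ⟨φ, fun i j hij => (hφ (j + 1)).1
    (show (⟨i, by omega⟩ : Fin (j + 1)) < ⟨j, by omega⟩ from hij), fun n α => ?_⟩
  have h := (hφ n).2 fun i => α i
  rw [Fin.sum_univ_eq_sum_range (fun i => |α i|),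
    Fin.sum_univ_eq_sum_range (fun i => α i • w (φ i))] at h
  refine le_trans (mul_le_mul_of_nonneg_right ?_ (Finset.sum_nonneg fun i _ => abs_nonneg _)) h
  linarith [show 0 ≤ ε / 2 ^ n by positivity]

end LOrthogonal

theorem statement19_general {X : Type*} [NormedAddCommGroup X] [NormedSpace ℝ X]
    (P : StrongDual ℝ (StrongDual ℝ X) →ₗ[ℝ] StrongDual ℝ (StrongDual ℝ X))
    (hProj : ∀ y, P (P y) = P y)
    (hRange : Set.range P = Set.range (fun v : X => inclusionInDoubleDual ℝ X v))
    (hL : ∀ y, ‖y‖ = ‖P y‖ + ‖y - P y‖)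
    (x : ℕ → X)
    (y : StrongDual ℝ (StrongDual ℝ X)) (hy : y ∈ weakStarClusterPoints x)
    (v : X) (hv : inclusionInDoubleDual ℝ X v = P y)
    (ε : ℝ) (hε : 0 < ε) :
    ∃ φ : ℕ → ℕ, StrictMono φ ∧
      ∀ (n : ℕ) (α : ℕ → ℝ),
        (‖y - P y‖ - ε) * ∑ i ∈ Finset.range n, |α i| ≤
          ‖∑ i ∈ Finset.range n, α i • (x (φ i) - v)‖ := by
  have hxs : MapClusterPt (StrongDual.toWeakDual (y - P y)) atTop
      fun k => StrongDual.toWeakDual (inclusionInDoubleDual ℝ X (x k - v)) := by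
    convert hy.continuousAt_comp (continuous_sub_right (StrongDual.toWeakDual (P y))).continuousAt
      using 2
    · exact map_sub StrongDual.toWeakDual y (P y)
    · simp [hv]
  exact exists_strictMono_le_norm_sum_smul
    (fun u β => (norm_inclusionInDoubleDual_add_smul_sub_proj hProj hRange hL y u β).ge) hxs hε

/-- Let `X` be an `L`-embedded Banach space with `L`-projection
`P : X** → X`, let `y = x**` be a weak* cluster point of a bounded sequence `(x_k)` in `X`,
`v ∈ X` the point with `ι v = P x**` and `x_s = x** − P x**`. Then for every
`ε ∈ (0, ‖x_s‖)` there is a subsequence `(x_{k_n})` such that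
`‖∑_{i=1}^n α_i (x_{k_i} − v)‖ ≥ (‖x_s‖ − ε) ∑_{i=1}^n |α_i|` for all `n` and all real
`α_1, …, α_n`. -/
theorem statement19 {X : Type*} [NormedAddCommGroup X] [NormedSpace ℝ X] [CompleteSpace X]
    (P : StrongDual ℝ (StrongDual ℝ X) →ₗ[ℝ] StrongDual ℝ (StrongDual ℝ X))
    (hProj : ∀ y, P (P y) = P y)
    (hRange : Set.range P = Set.range (fun v : X => inclusionInDoubleDual ℝ X v))
    (hL : ∀ y, ‖y‖ = ‖P y‖ + ‖y - P y‖)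
    (x : ℕ → X) (hb : ∃ M : ℝ, ∀ k, ‖x k‖ ≤ M)
    (y : StrongDual ℝ (StrongDual ℝ X)) (hy : y ∈ weakStarClusterPoints x)
    (v : X) (hv : inclusionInDoubleDual ℝ X v = P y)
    (ε : ℝ) (hε : 0 < ε) (hε' : ε < ‖y - P y‖) :
    ∃ φ : ℕ → ℕ, StrictMono φ ∧
      ∀ (n : ℕ) (α : ℕ → ℝ),
        (‖y - P y‖ - ε) * ∑ i ∈ Finset.range n, |α i| ≤
          ‖∑ i ∈ Finset.range n, α i • (x (φ i) - v)‖ :=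
  statement19_general P hProj hRange hL x y hy v hv ε hε
end
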